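/- arXiv:2111.11967 — 4 statements merged into one kernel-verified Lean document; each statement's English description precedes it below -/
import Mathlib

section
/- Let T be a spherically homogeneous rooted tree and let G ≤ Aut(T) be a branch group. Then G cannot act 2-set-transitively on an infinite set: for every action of G on an infinite set X, the induced action of G on the collection of 2-element subsets of X is not transitive. -/
open scoped Pointwise

/-! ## Spherically homogeneous rooted trees -/

/-- A vertex of the spherically homogeneous rooted tree over the shifted sequence of
alphabets `i ↦ A (i + k)`: a finite word whose `j`-th letter belongs to `A (j + k)`. -/
def Vtx (A : ℕ → Type*) (k : ℕ) : Type _ :=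
  {l : List (Σ i, A i) // ∀ j (h : j < l.length), (l[j]'h).1 = j + k}

namespace Vtx

variable {A : ℕ → Type*}

/-- The length of a vertex (the distance to the root). -/
def len {k : ℕ} (v : Vtx A k) : ℕ := v.1.length

/-- The prefix relation on vertices. -/
def Pre {k : ℕ} (v w : Vtx A k) : Prop := v.1 <+: w.1

/-- The `n`-th level of the tree: all vertices of length `n`. -/
def level (A : ℕ → Type*) (k : ℕ) (n : ℕ) : Set (Vtx A k) := {v | v.len = n}

/-- Concatenation of a vertex of the tree with a word over the shifted alphabets. -/
def cat (v : Vtx A 0) (w : Vtx A v.len) : Vtx A 0 :=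
  ⟨v.1 ++ w.1, by
    intro j h
    by_cases hj : j < v.1.length
    · rw [List.getElem_append_left hj]
      exact v.2 j hj
    · push_neg at hj
      rw [List.getElem_append_right hj]
      have h2 : j - v.1.length < w.1.length := by
        have h3 := h
        simp only [List.length_append] at h3
        omega
      exact (w.2 (j - v.1.length) h2).trans
        (by show j - v.1.length + v.1.length = j + 0; omega)⟩

/-- Deleting a prefix of length `n` from a vertex. -/
def dropPre (n : ℕ) (u : Vtx A 0) : Vtx A n :=
  ⟨u.1.drop n, by
    intro j h
    have h' : n + j < u.1.length := by
      simp only [List.length_drop] at h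
      omega
    rw [List.getElem_drop]
    exact (u.2 (n + j) h').trans (by omega)⟩

end Vtx

/-- The full automorphism group of the rooted tree `T_k`:
bijections of the vertex set preserving word length and the prefix relation. -/
def treeAut (A : ℕ → Type*) (k : ℕ) : Subgroup (Equiv.Perm (Vtx A k)) where
  carrier := {f | (∀ v, (f v).len = v.len) ∧ ∀ v w, Vtx.Pre (f v) (f w) ↔ Vtx.Pre v w}
  one_mem' := ⟨fun _ => rfl, fun _ _ => Iff.rfl⟩
  mul_mem' := by
    rintro f g ⟨hf1, hf2⟩ ⟨hg1, hg2⟩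
    constructor
    · intro v
      have : (f * g) v = f (g v) := rfl
      rw [this]
      exact (hf1 (g v)).trans (hg1 v)
    · intro v w
      have e1 : (f * g) v = f (g v) := rfl
      have e2 : (f * g) w = f (g w) := rfl
      rw [e1, e2]
      exact (hf2 (g v) (g w)).trans (hg2 v w)
  inv_mem' := by
    rintro f ⟨hf1, hf2⟩
    constructor
    · intro v
      conv_rhs => rw [← Equiv.apply_symm_apply f v]
      exact (hf1 _).symm
    · intro v w
      conv_rhs => rw [← Equiv.apply_symm_apply f v, ← Equiv.apply_symm_apply f w]
      exact (hf2 _ _).symm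

variable {A : ℕ → Type*}

/-- The stabiliser `St_H(v)` of a vertex `v` in a subgroup `H ≤ Perm`. -/
def vstab {k : ℕ} (H : Subgroup (Equiv.Perm (Vtx A k))) (v : Vtx A k) :
    Subgroup (Equiv.Perm (Vtx A k)) where
  carrier := {g | g ∈ H ∧ g v = v}
  one_mem' := ⟨H.one_mem, rfl⟩
  mul_mem' := by
    rintro a b ⟨ha, ha'⟩ ⟨hb, hb'⟩
    refine ⟨H.mul_mem ha hb, ?_⟩
    have : (a * b) v = a (b v) := rfl
    rw [this, hb', ha']
  inv_mem' := by
    rintro a ⟨ha, ha'⟩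
    refine ⟨H.inv_mem ha, ?_⟩
    conv_lhs => rw [← ha']
    exact Equiv.symm_apply_apply a v

/-- The stabiliser `St_H(n)` of the `n`-th level. -/
def levStab {k : ℕ} (H : Subgroup (Equiv.Perm (Vtx A k))) (n : ℕ) :
    Subgroup (Equiv.Perm (Vtx A k)) where
  carrier := {g | g ∈ H ∧ ∀ v : Vtx A k, v.len = n → g v = v}
  one_mem' := ⟨H.one_mem, fun _ _ => rfl⟩
  mul_mem' := by
    rintro a b ⟨ha, ha'⟩ ⟨hb, hb'⟩
    refine ⟨H.mul_mem ha hb, fun v hv => ?_⟩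
    have : (a * b) v = a (b v) := rfl
    rw [this, hb' v hv, ha' v hv]
  inv_mem' := by
    rintro a ⟨ha, ha'⟩
    refine ⟨H.inv_mem ha, fun v hv => ?_⟩
    conv_lhs => rw [← ha' v hv]
    exact Equiv.symm_apply_apply a v

/-- The rigid stabiliser `rist_H(v)`: elements of `H` fixing every vertex that does not
have `v` as a prefix. -/
def rist {k : ℕ} (H : Subgroup (Equiv.Perm (Vtx A k))) (v : Vtx A k) :
    Subgroup (Equiv.Perm (Vtx A k)) where
  carrier := {g | g ∈ H ∧ ∀ w : Vtx A k, ¬ Vtx.Pre v w → g w = w}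
  one_mem' := ⟨H.one_mem, fun _ _ => rfl⟩
  mul_mem' := by
    rintro a b ⟨ha, ha'⟩ ⟨hb, hb'⟩
    refine ⟨H.mul_mem ha hb, fun w hw => ?_⟩
    have : (a * b) w = a (b w) := rfl
    rw [this, hb' w hw, ha' w hw]
  inv_mem' := by
    rintro a ⟨ha, ha'⟩
    refine ⟨H.inv_mem ha, fun w hw => ?_⟩
    conv_lhs => rw [← ha' w hw]
    exact Equiv.symm_apply_apply a w

/-- The rigid level stabiliser `rist_H(n)`: the subgroup generated by the rigid
stabilisers of the vertices on the `n`-th level. -/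
def ristLev {k : ℕ} (H : Subgroup (Equiv.Perm (Vtx A k))) (n : ℕ) :
    Subgroup (Equiv.Perm (Vtx A k)) :=
  ⨆ v ∈ {v : Vtx A k | v.len = n}, rist H v

/-- `G` acts spherically transitively: transitively on every level of the tree. -/
def SphTrans {k : ℕ} (G : Subgroup (Equiv.Perm (Vtx A k))) : Prop :=
  ∀ v w : Vtx A k, v.len = w.len → ∃ g ∈ G, g v = w

/-- `G ≤ Aut(T_k)` is a branch group. -/
structure IsBranch {k : ℕ} (G : Subgroup (Equiv.Perm (Vtx A k))) : Prop where
  le_aut : G ≤ treeAut A k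
  trans : SphTrans G
  rist_fi : ∀ n : ℕ, (ristLev G n).relIndex G ≠ 0

/-- `G ≤ Aut(T_k)` is a weakly branch group. -/
structure IsWeaklyBranch {k : ℕ} (G : Subgroup (Equiv.Perm (Vtx A k))) : Prop where
  le_aut : G ≤ treeAut A k
  trans : SphTrans G
  rist_nt : ∀ n : ℕ, ristLev G n ≠ ⊥

/-! ## Sections -/

namespace Vtx

theorem dropPre_cat (v : Vtx A 0) (w : Vtx A v.len) : dropPre v.len (cat v w) = w := by
  apply Subtype.ext
  show (v.1 ++ w.1).drop v.1.length = w.1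
  exact List.drop_left

theorem pre_cat (v : Vtx A 0) (w : Vtx A v.len) : Pre v (cat v w) := ⟨w.1, rfl⟩

theorem cat_dropPre {v u : Vtx A 0} (h : Pre v u) : cat v (dropPre v.len u) = u := by
  apply Subtype.ext
  show v.1 ++ u.1.drop v.1.length = u.1
  obtain ⟨t, ht⟩ := h
  rw [← ht, List.drop_left]

end Vtx

/-- The section map `φ_v` at the level of plain functions. -/
def secFun (v : Vtx A 0) (f : Equiv.Perm (Vtx A 0)) : Vtx A v.len → Vtx A v.len :=
  fun w => Vtx.dropPre v.len (f (Vtx.cat v w))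

theorem secFun_key {v : Vtx A 0} {f : Equiv.Perm (Vtx A 0)}
    (hf : f ∈ vstab (treeAut A 0) v) (w : Vtx A v.len) :
    Vtx.cat v (secFun v f w) = f (Vtx.cat v w) := by
  obtain ⟨⟨hlen, hpre⟩, hfix⟩ := hf
  apply Vtx.cat_dropPre
  have := (hpre v (Vtx.cat v w))
  rw [hfix] at this
  exact this.mpr (Vtx.pre_cat v w)

theorem secFun_mul {v : Vtx A 0} {f g : Equiv.Perm (Vtx A 0)}
    (hf : f ∈ vstab (treeAut A 0) v) (hg : g ∈ vstab (treeAut A 0) v) :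
    secFun v (f * g) = secFun v f ∘ secFun v g := by
  funext w
  show Vtx.dropPre v.len ((f * g) (Vtx.cat v w)) = Vtx.dropPre v.len (f (Vtx.cat v (secFun v g w)))
  rw [secFun_key hg w]
  rfl

theorem secFun_one (v : Vtx A 0) : secFun v (1 : Equiv.Perm (Vtx A 0)) = id := by
  funext w
  show Vtx.dropPre v.len ((1 : Equiv.Perm (Vtx A 0)) (Vtx.cat v w)) = w
  rw [Equiv.Perm.one_apply]
  exact Vtx.dropPre_cat v w

theorem secFun_bij {v : Vtx A 0} {f : Equiv.Perm (Vtx A 0)}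
    (hf : f ∈ vstab (treeAut A 0) v) : Function.Bijective (secFun v f) := by
  rw [Function.bijective_iff_has_inverse]
  refine ⟨secFun v f⁻¹, fun w => ?_, fun w => ?_⟩
  · have h1 := congrFun (secFun_mul (inv_mem hf) hf) w
    rw [inv_mul_cancel, secFun_one] at h1
    exact h1.symm
  · have h1 := congrFun (secFun_mul hf (inv_mem hf)) w
    rw [mul_inv_cancel, secFun_one] at h1
    exact h1.symm

open Classical in
noncomputable def secPerm (v : Vtx A 0) (f : Equiv.Perm (Vtx A 0)) :
    Equiv.Perm (Vtx A v.len) :=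
  if h : Function.Bijective (secFun v f) then Equiv.ofBijective _ h else 1

theorem secPerm_coe {v : Vtx A 0} {f : Equiv.Perm (Vtx A 0)}
    (hf : f ∈ vstab (treeAut A 0) v) : ⇑(secPerm v f) = secFun v f := by
  unfold secPerm
  rw [dif_pos (secFun_bij hf)]
  rfl

/-- The section homomorphism `φ_v : St_{Aut(T)}(v) → Perm(T_{|v|})`. -/
noncomputable def phiHom (v : Vtx A 0) :
    ↥(vstab (treeAut A 0) v) →* Equiv.Perm (Vtx A v.len) where
  toFun f := secPerm v f.1
  map_one' := by
    apply Equiv.ext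
    intro w
    show secPerm v (1 : Equiv.Perm (Vtx A 0)) w = (1 : Equiv.Perm (Vtx A v.len)) w
    rw [secPerm_coe (one_mem (vstab (treeAut A 0) v)), secFun_one]
    rfl
  map_mul' := by
    intro f g
    apply Equiv.ext
    intro w
    show secPerm v (f.1 * g.1) w = (secPerm v f.1 * secPerm v g.1) w
    have e : (secPerm v f.1 * secPerm v g.1) w = secPerm v f.1 (secPerm v g.1 w) := rfl
    rw [e, secPerm_coe (mul_mem f.2 g.2), secPerm_coe f.2, secPerm_coe g.2,
      secFun_mul f.2 g.2]
    rfl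

/-- The image `φ_v(St_H(v)) ≤ Perm(T_{|v|})` of the stabiliser of `v` in `H` under the
section homomorphism at `v`; for `H ≤ G ≤ Aut(T)` this is the subgroup written `H_v`. -/
noncomputable def secSub (v : Vtx A 0) (H : Subgroup (Equiv.Perm (Vtx A 0))) :
    Subgroup (Equiv.Perm (Vtx A v.len)) :=
  Subgroup.map (phiHom v) ((vstab H v).subgroupOf (vstab (treeAut A 0) v))

/-- A subgroup `H ≤ G` has finite bi-index if the set of double cosets
`{HgH : g ∈ G}` is finite. -/
def FiniteBiIndex {G : Type*} [Group G] (H : Subgroup G) : Prop :=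
  {S : Set G | ∃ g : G, S = (H : Set G) * {g} * (H : Set G)}.Finite

/-- The set of double cosets of a subgroup `H` of a group `M` with representatives in a
subgroup `G` of `M`; for `H ≤ G` this is the set of double cosets `H\G/H`. -/
def doubleCosets {M : Type*} [Group M] (G H : Subgroup M) : Set (Set M) :=
  {S : Set M | ∃ g ∈ G, S = (H : Set M) * {g} * (H : Set M)}

/-- The pro-normal closure of a subgroup `H ≤ G`: the intersection of the subsets `HN`,
over all nontrivial normal subgroups `N` of `G`. -/
def pronormalClosure {G : Type*} [Group G] (H : Subgroup G) : Subgroup G where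
  carrier := ⋂ N ∈ {N : Subgroup G | N.Normal ∧ N ≠ ⊥}, (H : Set G) * (N : Set G)
  one_mem' := by
    simp only [Set.mem_iInter]
    rintro N ⟨hN, -⟩
    exact ⟨1, H.one_mem, 1, N.one_mem, mul_one 1⟩
  mul_mem' := by
    intro a b ha hb
    simp only [Set.mem_iInter] at ha hb ⊢
    rintro N hN
    obtain ⟨h₁, hh₁, n₁, hn₁, rfl⟩ := ha N hN
    obtain ⟨h₂, hh₂, n₂, hn₂, rfl⟩ := hb N hN
    refine ⟨h₁ * h₂, H.mul_mem hh₁ hh₂, (h₂⁻¹ * n₁ * h₂) * n₂, ?_, by group⟩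
    refine N.mul_mem ?_ hn₂
    have := hN.1.conj_mem n₁ hn₁ h₂⁻¹
    simpa using this
  inv_mem' := by
    intro a ha
    simp only [Set.mem_iInter] at ha ⊢
    rintro N hN
    obtain ⟨h, hh, n, hn, rfl⟩ := ha N hN
    refine ⟨h⁻¹, H.inv_mem hh, h * n⁻¹ * h⁻¹, hN.1.conj_mem n⁻¹ (N.inv_mem hn) h, by group⟩

/-- A subgroup `H ≤ G` is quasi-prodense if its pro-normal closure has finite index. -/
def QuasiProdense {G : Type*} [Group G] (H : Subgroup G) : Prop :=
  (pronormalClosure H).index ≠ 0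

/-- `K` is a normal subgroup of the subgroup `H` (both subgroups of an ambient group). -/
def NormalIn {M : Type*} [Group M] (H K : Subgroup M) : Prop :=
  K ≤ H ∧ ∀ h ∈ H, ∀ k ∈ K, h * k * h⁻¹ ∈ K

/-- `K` is a subnormal subgroup of the subgroup `H`. -/
def SubnormalIn {M : Type*} [Group M] (H K : Subgroup M) : Prop :=
  ∃ (m : ℕ) (c : ℕ → Subgroup M), c 0 = K ∧ c m = H ∧ ∀ i < m, NormalIn (c (i + 1)) (c i)

/-- The iterated derived subgroups of a subgroup. -/
def iterDerived {M : Type*} [Group M] (H : Subgroup M) : ℕ → Subgroup M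
  | 0 => H
  | (k + 1) => ⁅iterDerived H k, iterDerived H k⁆

/-!
For `w` on the second level, the subgroups `rist_G(w)` commute pairwise, are permuted transitively
by conjugation, are at least three in number, and generate a subgroup `N` of finite index. By
two-set-transitivity, the number of `w` such that `x` and `y` lie in one `rist_G(w)`-orbit is the
same for all pairs `x ≠ y`.

If this number is zero, `N` acts trivially. Otherwise every point is linked to a fixed `x₀`
through one of the finitely many `w`, so some `rist_G(w)`-orbit is infinite. Comparing the pairs
`{z, y}` and `{y, y'}` for `y, y'` in that orbit and `z` outside it shows that the orbit is all of
`X`. Then every `rist_G(w)` acts transitively and is centralised by the others, so `N` acts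
through a single `rist_G(w)`, in which only the identity fixes a point.

In both cases the stabiliser of a point acts on `X` through a quotient of size at most `[G : N]`,
so all its orbits are finite; this is impossible for a two-set-transitive action on an infinite
set.
-/

section Combinatorics

variable {ι X : Type*}

theorem Set.exists_ne_ne_of_two_lt_ncard {L : Set ι} (hL : 2 < L.ncard)
    (i j : ι) : ∃ u ∈ L, u ≠ i ∧ u ≠ j := by
  have hpair : ({i, j} : Set ι).ncard ≤ 2 :=
    (Set.ncard_insert_le i {j}).trans (by rw [Set.ncard_singleton])
  obtain ⟨u, hu, hij⟩ := Set.nonempty_of_ncard_ne_zero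
    (by have := Set.le_ncard_sdiff {i, j} L; omega : (L \ {i, j}).ncard ≠ 0)
  simp only [Set.mem_insert_iff, Set.mem_singleton_iff, not_or] at hij
  exact ⟨u, hu, hij⟩

theorem forall_rel_of_infinite_class {R : ι → X → X → Prop}
    (hR : ∀ i, Equivalence (R i)) {L : Set ι} (hL : L.Finite)
    (hconst : ∀ {x y x' y'}, x ≠ y → x' ≠ y' →
      {i ∈ L | R i x y}.ncard = {i ∈ L | R i x' y'}.ncard)
    {w : ι} (hw : w ∈ L) {x : X} (hx : {y | R w x y}.Infinite) (z : X) : R w x z := by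
  by_contra hz
  refine hx (Set.Finite.of_finite_image (f := fun y => {i ∈ L | R i z y})
    (hL.finite_subsets.subset ?_) fun y hy y' hy' hyy' => ?_)
  · rintro _ ⟨y, -, rfl⟩
    exact Set.sep_subset _ _
  replace hyy' : {i ∈ L | R i z y} = {i ∈ L | R i z y'} := hyy'
  by_contra hne
  have hsub : {i ∈ L | R i z y} ⊂ {i ∈ L | R i y y'} := by
    refine ⟨fun i hi => ⟨hi.1, ?_⟩, fun hsup => ?_⟩
    · have hi' : i ∈ {i ∈ L | R i z y'} := hyy' ▸ hi
      exact (hR i).trans ((hR i).symm hi.2) hi'.2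
    · have hwz := (hsup ⟨hw, (hR w).trans ((hR w).symm hy) hy'⟩).2
      exact hz ((hR w).trans hy ((hR w).symm hwz))
  have hlt := Set.ncard_lt_ncard hsub (hL.subset (Set.sep_subset _ _))
  rw [hconst (fun hzy => hz (by rw [hzy]; exact hy)) hne] at hlt
  exact lt_irrefl _ hlt

end Combinatorics

section TwoSetTransitive

variable {Γ X : Type*} [Group Γ]

def IsTwoSetTransitive (φ : Γ →* Equiv.Perm X) : Prop :=
  ∀ S T : Set X, S.ncard = 2 → T.ncard = 2 → ∃ g, ⇑(φ g) '' S = T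

def OrbitRel (φ : Γ →* Equiv.Perm X) (K : Subgroup Γ) (x y : X) : Prop :=
  ∃ k ∈ K, φ k x = y

variable {φ : Γ →* Equiv.Perm X}

theorem orbitRel_equivalence (K : Subgroup Γ) : Equivalence (OrbitRel φ K) where
  refl _ := ⟨1, K.one_mem, by simp⟩
  symm := fun ⟨k, hk, h⟩ => ⟨k⁻¹, K.inv_mem hk, by simp [← h]⟩
  trans := fun ⟨k, hk, h⟩ ⟨l, hl, h'⟩ => ⟨l * k, K.mul_mem hl hk, by simp [h, h']⟩

namespace IsTwoSetTransitive

theorem exists_apply_pair (h : IsTwoSetTransitive φ) {x y x' y' : X} (hxy : x ≠ y)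
    (hxy' : x' ≠ y') : ∃ g, φ g x = x' ∧ φ g y = y' ∨ φ g x = y' ∧ φ g y = x' := by
  obtain ⟨g, hg⟩ := h {x, y} {x', y'} (Set.ncard_pair hxy) (Set.ncard_pair hxy')
  rw [Set.image_pair, Set.pair_eq_pair_iff] at hg
  exact ⟨g, hg⟩

theorem exists_apply_eq [Infinite X] (h : IsTwoSetTransitive φ) (x y : X) :
    ∃ g, φ g x = y := by
  classical
  rcases eq_or_ne x y with rfl | -
  · exact ⟨1, by simp⟩
  obtain ⟨z, hz⟩ := Infinite.exists_notMem_finset {x, y}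
  simp only [Finset.mem_insert, Finset.mem_singleton, not_or] at hz
  obtain ⟨g, ⟨-, hgx⟩ | ⟨hgz, hgx⟩⟩ := h.exists_apply_pair hz.1 hz.2
  · exact ⟨g, hgx⟩
  · exact ⟨g * g, by rw [map_mul, Equiv.Perm.mul_apply, hgx, hgz]⟩

theorem exists_infinite_stabilizer_orbit [Infinite X] (h : IsTwoSetTransitive φ) (x₀ : X) :
    ∃ y, {z | ∃ g, φ g x₀ = x₀ ∧ φ g y = z}.Infinite := by
  obtain ⟨y₀, hy₀⟩ := exists_ne x₀
  obtain ⟨t, ht⟩ := h.exists_apply_eq y₀ x₀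
  by_contra! hfin
  refine Set.infinite_univ (((hfin y₀).union (hfin (φ t x₀))).insert x₀ |>.subset fun z _ => ?_)
  rcases eq_or_ne z x₀ with rfl | hz
  · exact Set.mem_insert _ _
  obtain ⟨g, ⟨hgx, hgy⟩ | ⟨hgx, hgy⟩⟩ := h.exists_apply_pair hy₀.symm hz.symm
  · exact Or.inr (Or.inl ⟨g, hgx, hgy⟩)
  · have hy₀' : (φ t)⁻¹ x₀ = y₀ := by rw [Equiv.Perm.inv_eq_iff_eq, ht]
    refine Or.inr (Or.inr ⟨g * t⁻¹, ?_, by simp [hgx]⟩)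
    rw [map_mul, map_inv, Equiv.Perm.mul_apply, hy₀', hgy]

end IsTwoSetTransitive

theorem finite_stabilizer_orbit {N : Subgroup Γ} (hN : N.index ≠ 0) {x₀ : X}
    (hfree : ∀ n ∈ N, φ n x₀ = x₀ → φ n = 1) (y : X) :
    {z | ∃ g, φ g x₀ = x₀ ∧ φ g y = z}.Finite := by
  have : N.FiniteIndex := ⟨hN⟩
  have hrep : ∀ z ∈ {z | ∃ g, φ g x₀ = x₀ ∧ φ g y = z}, ∃ g, φ g x₀ = x₀ ∧ φ g y = z :=
    fun _ hz => hz
  choose! rep hrep_fix hrep_apply using hrep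
  refine Set.Finite.of_finite_image (f := fun z => (rep z : Γ ⧸ N)) (Set.toFinite _)
    fun z hz z' hz' hzz' => ?_
  have hφ : (φ (rep z))⁻¹ * φ (rep z') = 1 := by
    rw [← map_inv, ← map_mul]
    refine hfree _ (QuotientGroup.eq.mp hzz') ?_
    rw [map_mul, map_inv, Equiv.Perm.mul_apply, hrep_fix z' hz', Equiv.Perm.inv_eq_iff_eq,
      hrep_fix z hz]
  rw [← hrep_apply z hz, ← hrep_apply z' hz', inv_mul_eq_one.mp hφ]

theorem map_eq_of_forall_commute {K : Subgroup Γ} (hK : ∀ x y, OrbitRel φ K x y) {a b : Γ}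
    (ha : ∀ k ∈ K, Commute a k) (hb : ∀ k ∈ K, Commute b k) {x₀ : X}
    (hab : φ a x₀ = φ b x₀) : φ a = φ b := by
  ext x
  obtain ⟨k, hk, rfl⟩ := hK x₀ x
  calc φ a (φ k x₀) = φ k (φ a x₀) := DFunLike.congr_fun ((ha k hk).map φ).eq x₀
    _ = φ k (φ b x₀) := by rw [hab]
    _ = φ b (φ k x₀) := (DFunLike.congr_fun ((hb k hk).map φ).eq x₀).symm

end TwoSetTransitive

section CommutingFamily

variable {Γ X ι : Type*} [Group Γ] {φ : Γ →* Equiv.Perm X} {H : ι → Subgroup Γ}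

theorem map_eq_one_of_mem_iSup {L : Set ι} (hL3 : 2 < L.ncard)
    (hcomm : L.Pairwise fun i j => ∀ a ∈ H i, ∀ b ∈ H j, Commute a b)
    (htot : ∀ i ∈ L, ∀ x y, OrbitRel φ (H i) x y) {n : Γ} (hn : n ∈ ⨆ i ∈ L, H i)
    {x₀ : X} (hfix : φ n x₀ = x₀) : φ n = 1 := by
  obtain ⟨w, hw⟩ := Set.nonempty_of_ncard_ne_zero (by omega : L.ncard ≠ 0)
  have hmap_eq : ∀ {i a b}, i ∈ L → a ∈ H i → b ∈ H w → φ a x₀ = φ b x₀ → φ a = φ b := by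
    intro i a b hi ha hb hab
    obtain ⟨u, hu, hui, huw⟩ := Set.exists_ne_ne_of_two_lt_ncard hL3 i w
    exact map_eq_of_forall_commute (htot u hu) (hcomm hi hu hui.symm a ha)
      (hcomm hw hu huw.symm b hb) hab
  have hle : ⨆ i ∈ L, H i ≤ ((H w).map φ).comap φ := iSup₂_le fun i hi a ha => by
    obtain ⟨b, hb, hba⟩ := htot w hw x₀ (φ a x₀)
    exact ⟨b, hb, (hmap_eq hi ha hb hba.symm).symm⟩
  obtain ⟨b, hb, hbn⟩ := hle hn
  rw [← hbn] at hfix ⊢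
  simpa using hmap_eq hw hb (H w).one_mem (by simpa using hfix)

variable [MulAction Γ ι]

def IsConjEquivariant (H : ι → Subgroup Γ) : Prop :=
  ∀ (g : Γ) (i : ι), ∀ k ∈ H i, g * k * g⁻¹ ∈ H (g • i)

theorem OrbitRel.conj (hconj : IsConjEquivariant H) {i : ι} {x y : X}
    (h : OrbitRel φ (H i) x y) (g : Γ) :
    OrbitRel φ (H (g • i)) (φ g x) (φ g y) := by
  obtain ⟨k, hk, rfl⟩ := h
  exact ⟨g * k * g⁻¹, hconj g i k hk, by simp⟩

theorem orbitRel_total_smul (hconj : IsConjEquivariant H) {i : ι}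
    (htot : ∀ x y, OrbitRel φ (H i) x y) (g : Γ) (x y : X) :
    OrbitRel φ (H (g • i)) x y := by
  simpa using (htot ((φ g)⁻¹ x) ((φ g)⁻¹ y)).conj hconj g

theorem ncard_orbitRel_apply (hconj : IsConjEquivariant H) {L : Set ι}
    (hL : ∀ g : Γ, ∀ i ∈ L, g • i ∈ L) (g : Γ) (x y : X) :
    {i ∈ L | OrbitRel φ (H i) (φ g x) (φ g y)}.ncard = {i ∈ L | OrbitRel φ (H i) x y}.ncard := by
  have himage : {i ∈ L | OrbitRel φ (H i) (φ g x) (φ g y)} =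
      (g • ·) '' {i ∈ L | OrbitRel φ (H i) x y} := by
    ext j
    refine ⟨fun ⟨hj, hrel⟩ => ⟨g⁻¹ • j, ⟨hL _ _ hj, by simpa using hrel.conj hconj g⁻¹⟩,
      smul_inv_smul g j⟩, ?_⟩
    rintro ⟨i, ⟨hi, hrel⟩, rfl⟩
    exact ⟨hL g i hi, hrel.conj hconj g⟩
  rw [himage, Set.ncard_image_of_injective _ (MulAction.injective g)]

theorem IsTwoSetTransitive.ncard_orbitRel_eq (h : IsTwoSetTransitive φ) {L : Set ι}
    (hL : ∀ g : Γ, ∀ i ∈ L, g • i ∈ L) (hconj : IsConjEquivariant H) {x y x' y' : X}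
    (hxy : x ≠ y) (hxy' : x' ≠ y') :
    {i ∈ L | OrbitRel φ (H i) x y}.ncard = {i ∈ L | OrbitRel φ (H i) x' y'}.ncard := by
  obtain ⟨g, ⟨rfl, rfl⟩ | ⟨rfl, rfl⟩⟩ := h.exists_apply_pair hxy hxy'
  · exact (ncard_orbitRel_apply hconj hL g x y).symm
  · rw [← ncard_orbitRel_apply hconj hL g x y]
    congr 1
    ext i
    exact and_congr_right fun _ =>
      ⟨(orbitRel_equivalence _).symm, (orbitRel_equivalence _).symm⟩

theorem IsTwoSetTransitive.exists_orbitRel_total [Infinite X] (h : IsTwoSetTransitive φ)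
    {L : Set ι} (hLfin : L.Finite) (hL : ∀ g : Γ, ∀ i ∈ L, g • i ∈ L)
    (hconj : IsConjEquivariant H) {i₀ : ι} (hi₀ : i₀ ∈ L) {a b : X} (hab : a ≠ b)
    (hrel : OrbitRel φ (H i₀) a b) :
    ∃ w ∈ L, ∀ x y, OrbitRel φ (H w) x y := by
  obtain ⟨x₀⟩ := (inferInstance : Nonempty X)
  have hlinked : ∀ z ≠ x₀, ∃ i ∈ L, OrbitRel φ (H i) x₀ z := fun z hz =>
    Set.nonempty_of_ncard_ne_zero (s := {i ∈ L | OrbitRel φ (H i) x₀ z}) <| by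
      rw [h.ncard_orbitRel_eq hL hconj hz.symm hab]
      exact ((Set.ncard_pos (hLfin.subset (Set.sep_subset _ _))).mpr ⟨i₀, hi₀, hrel⟩).ne'
  obtain ⟨w, hw, hinf⟩ : ∃ w ∈ L, {y | OrbitRel φ (H w) x₀ y}.Infinite := by
    by_contra! hfin
    refine Set.infinite_univ ((hLfin.biUnion hfin).insert x₀ |>.subset fun z _ => ?_)
    rcases eq_or_ne z x₀ with rfl | hz
    · exact Set.mem_insert _ _
    obtain ⟨i, hi, hrel⟩ := hlinked z hz
    exact Set.mem_insert_of_mem _ (Set.mem_biUnion hi hrel)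
  have hR := fun i => orbitRel_equivalence (φ := φ) (H i)
  have hx₀ := forall_rel_of_infinite_class hR hLfin (h.ncard_orbitRel_eq hL hconj) hw hinf
  exact ⟨w, hw, fun x y => (hR w).trans ((hR w).symm (hx₀ x)) (hx₀ y)⟩

theorem not_isTwoSetTransitive_of_commuting_family [Infinite X] {L : Set ι} (hL3 : 2 < L.ncard)
    (hL : ∀ g : Γ, ∀ i ∈ L, g • i ∈ L) (hLtrans : ∀ i ∈ L, ∀ j ∈ L, ∃ g : Γ, g • i = j)
    (hconj : IsConjEquivariant H)
    (hcomm : L.Pairwise fun i j => ∀ a ∈ H i, ∀ b ∈ H j, Commute a b)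
    (hN : (⨆ i ∈ L, H i).index ≠ 0) : ¬ IsTwoSetTransitive φ := by
  intro h
  obtain ⟨x₀⟩ := (inferInstance : Nonempty X)
  suffices hfree : ∀ n ∈ ⨆ i ∈ L, H i, φ n x₀ = x₀ → φ n = 1 by
    obtain ⟨y, hy⟩ := h.exists_infinite_stabilizer_orbit x₀
    exact hy (finite_stabilizer_orbit hN hfree y)
  by_cases htriv : ∀ i ∈ L, ∀ x y, OrbitRel φ (H i) x y → x = y
  · have hker : ⨆ i ∈ L, H i ≤ φ.ker := iSup₂_le fun i hi k hk =>
      φ.mem_ker.mpr (Equiv.ext fun x => (htriv i hi x _ ⟨k, hk, rfl⟩).symm)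
    exact fun n hn _ => hker hn
  push Not at htriv
  obtain ⟨i₀, hi₀, a, b, hrel, hab⟩ := htriv
  obtain ⟨w, hw, htot⟩ := h.exists_orbitRel_total (Set.finite_of_ncard_pos (by omega)) hL hconj
    hi₀ hab hrel
  refine fun n hn => map_eq_one_of_mem_iSup hL3 hcomm (fun i hi => ?_) hn
  obtain ⟨g, rfl⟩ := hLtrans w hw i hi
  exact orbitRel_total_smul hconj htot g

end CommutingFamily

section RigidStabilisers

variable {A : ℕ → Type*} {k : ℕ}

theorem Vtx.Pre.eq_of_len_eq {u v w : Vtx A k} (hv : Vtx.Pre v u) (hw : Vtx.Pre w u)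
    (h : v.len = w.len) : v = w :=
  Subtype.ext ((List.prefix_of_prefix_length_le hv hw h.le).eq_of_length h)

variable {H : Subgroup (Equiv.Perm (Vtx A k))} {v : Vtx A k} {c : Equiv.Perm (Vtx A k)}

theorem rist_apply_self (hH : H ≤ treeAut A k) (hc : c ∈ rist H v) : c v = v := by
  by_cases hp : Vtx.Pre v (c v)
  · exact (hp.eq_of_len_eq (List.prefix_refl _) ((hH hc.1).1 v).symm).symm
  · exact c.injective (hc.2 _ hp)

theorem rist_pre (hH : H ≤ treeAut A k) (hc : c ∈ rist H v) {u : Vtx A k}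
    (hu : Vtx.Pre v u) : Vtx.Pre v (c u) := by
  simpa only [rist_apply_self hH hc] using ((hH hc.1).2 v u).mpr hu

theorem rist_apply_of_pre (hc : c ∈ rist H v) {w u : Vtx A k} (hvw : v ≠ w)
    (hlen : v.len = w.len) (hu : Vtx.Pre w u) : c u = u :=
  hc.2 u fun hv => hvw (hv.eq_of_len_eq hu hlen)

theorem rist_commute (hH : H ≤ treeAut A k) {w : Vtx A k} (hvw : v ≠ w) (hlen : v.len = w.len)
    {d : Equiv.Perm (Vtx A k)} (hc : c ∈ rist H v) (hd : d ∈ rist H w) : Commute c d := by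
  refine Equiv.ext fun u => ?_
  show c (d u) = d (c u)
  by_cases hv : Vtx.Pre v u
  · rw [rist_apply_of_pre hd hvw.symm hlen.symm hv,
      rist_apply_of_pre hd hvw.symm hlen.symm (rist_pre hH hc hv)]
  by_cases hw : Vtx.Pre w u
  · rw [rist_apply_of_pre hc hvw hlen (rist_pre hH hd hw), rist_apply_of_pre hc hvw hlen hw]
  · rw [hc.2 u hv, hd.2 u hw, hc.2 u hv]

theorem rist_conj (hH : H ≤ treeAut A k) {g : Equiv.Perm (Vtx A k)} (hg : g ∈ H)
    (hc : c ∈ rist H v) : g * c * g⁻¹ ∈ rist H (g v) := by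
  refine ⟨H.mul_mem (H.mul_mem hg hc.1) (H.inv_mem hg), fun u hu => ?_⟩
  have hnp : ¬ Vtx.Pre v (g⁻¹ u) := fun hp => hu (by simpa using ((hH hg).2 v (g⁻¹ u)).mpr hp)
  rw [Equiv.Perm.mul_apply, Equiv.Perm.mul_apply, hc.2 _ hnp]
  simp

theorem subgroupOf_ristLev_le (G : Subgroup (Equiv.Perm (Vtx A k))) (n : ℕ) :
    (ristLev G n).subgroupOf G ≤ ⨆ v ∈ Vtx.level A k n, (rist G v).subgroupOf G := by
  refine (Subgroup.comap_mono (iSup₂_le fun v hv => ?_)).trans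
    (Subgroup.comap_map_eq_self_of_injective G.subtype_injective _).le
  rw [← Subgroup.map_subgroupOf_eq_of_le (fun _ hg => hg.1 : rist G v ≤ G)]
  exact Subgroup.map_mono (le_iSup₂ (f := fun v _ => (rist G v).subgroupOf G) v hv)

end RigidStabilisers

namespace Vtx

variable {A : ℕ → Type*}

def pair (a : A 0) (b : A 1) : Vtx A 0 :=
  ⟨[⟨0, a⟩, ⟨1, b⟩], by
    intro j h
    simp only [List.length_cons, List.length_nil] at h
    interval_cases j <;> rfl⟩

theorem pair_injective : Function.Injective fun ab : A 0 × A 1 => pair ab.1 ab.2 := by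
  rintro ⟨a, b⟩ ⟨a', b'⟩ h
  have := congrArg Subtype.val h
  simp only [pair, List.cons.injEq, and_true] at this
  rw [sigma_mk_injective this.1, sigma_mk_injective this.2]

theorem level_two_eq_range : level A 0 2 = Set.range fun ab : A 0 × A 1 => pair ab.1 ab.2 := by
  ext v
  refine ⟨fun h => ?_, ?_⟩
  · obtain ⟨l, hl⟩ := v
    match l, hl, h with
    | [⟨i, a⟩, ⟨j, b⟩], hl, _ =>
      obtain rfl : i = 0 := hl 0 (by simp)
      obtain rfl : j = 1 := hl 1 (by simp)
      exact ⟨(a, b), rfl⟩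
  · rintro ⟨ab, rfl⟩
    rfl

theorem two_lt_ncard_level_two [∀ i, Fintype (A i)] (hA : ∀ i, 2 ≤ Fintype.card (A i)) :
    2 < (level A 0 2).ncard := by
  rw [level_two_eq_range, Set.ncard_range_of_injective pair_injective, Nat.card_prod,
    Nat.card_eq_fintype_card, Nat.card_eq_fintype_card]
  nlinarith [hA 0, hA 1]

end Vtx

/-- A branch group cannot act 2-set-transitively on an infinite set: for every action
of the branch group `G` on an infinite set `X`, the induced action on 2-element subsets
of `X` is not transitive. -/
theorem branch_not_two_set_transitive
    (A : ℕ → Type*) [∀ i, Fintype (A i)] (hA : ∀ i, 2 ≤ Fintype.card (A i))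
    (G : Subgroup (Equiv.Perm (Vtx A 0))) (hG : IsBranch G)
    (X : Type*) [Infinite X] (φ : G →* Equiv.Perm X) :
    ¬ ∀ S T : Set X, S.ncard = 2 → T.ncard = 2 → ∃ g : G, ⇑(φ g) '' S = T := by
  have hle := hG.le_aut
  refine not_isTwoSetTransitive_of_commuting_family (H := fun v => (rist G v).subgroupOf G)
    (Vtx.two_lt_ncard_level_two hA) (fun g v hv => ((hle g.2).1 v).trans hv) ?_
    (fun g v c hc => rist_conj hle g.2 hc)
    (fun v hv w hw hvw a ha b hb => Subtype.ext (rist_commute hle hvw (hv.trans hw.symm) ha hb))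
    (ne_zero_of_dvd_ne_zero (hG.rist_fi 2) (Subgroup.index_dvd_of_le (subgroupOf_ristLev_le G 2)))
  intro v hv w hw
  obtain ⟨g, hg, hgv⟩ := hG.trans v w (hv.trans hw.symm)
  exact ⟨⟨g, hg⟩, hgv⟩
end

section
/- Let T be a spherically homogeneous rooted tree, let G ≤ Aut(T), and let H ≤ G be a nontrivial subgroup. Let v be a vertex of T such that the H-orbit of v is not {v}, and let R ≤ rist_G(v) be a subgroup of rist_G(v) that normalises H. Then the derived subgroup [R,R] is contained in H. In particular, if H is normal in G and G acts spherically transitively on T, then rist_G'(|v|) ≤ H. -/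
open scoped Pointwise

variable {A : ℕ → Type*}

/-!
Pick `h ∈ H` with `h v ≠ v`. For `r, s ∈ R` the element `c = h s⁻¹ h⁻¹` is supported on the
subtree below `h v`, which is disjoint from the subtree below `v` carrying the support of `r`,
so `r` and `c` commute. Hence `⁅r, s⁆ = ⁅r, s c⁆`, and `s c = ⁅s, h⁆ ∈ H` because `s`
normalises `H`; as `r` normalises `H` too, `⁅r, s c⁆ ∈ H`.

For the second claim, normality of `H` and transitivity on the level of `v` give such an `h`
for every vertex `u` of that level, so `⁅rist_G(u), rist_G(u)⁆ ≤ H`; rigid stabilisers of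
distinct vertices of one level commute, and commutators modulo `H` are bimultiplicative in
elements normalising `H`.
-/

open scoped commutatorElement

theorem commutatorElement_mem_of_commute {M : Type*} [Group M] {H : Subgroup M} {r s c : M}
    (hr : ∀ x ∈ H, r * x * r⁻¹ ∈ H) (hsc : s * c ∈ H) (hc : Commute r c) : ⁅r, s⁆ ∈ H := by
  have key : ⁅r, s * c⁆ = ⁅r, s⁆ := by
    calc r * (s * c) * r⁻¹ * (s * c)⁻¹ = r * s * (c * r⁻¹) * c⁻¹ * s⁻¹ := by group
      _ = r * s * (r⁻¹ * c) * c⁻¹ * s⁻¹ := by rw [hc.inv_left.eq]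
      _ = r * s * r⁻¹ * s⁻¹ := by group
  rw [← key, commutatorElement_def]
  exact H.mul_mem (hr _ hsc) (H.inv_mem hsc)

theorem commutatorElement_mul_right_mem {M : Type*} [Group M] {H : Subgroup M} {a b₁ b₂ : M}
    (hb₁ : ∀ x ∈ H, b₁ * x * b₁⁻¹ ∈ H) (h₁ : ⁅a, b₁⁆ ∈ H) (h₂ : ⁅a, b₂⁆ ∈ H) :
    ⁅a, b₁ * b₂⁆ ∈ H := by
  have e : ⁅a, b₁ * b₂⁆ = ⁅a, b₁⁆ * (b₁ * ⁅a, b₂⁆ * b₁⁻¹) := by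
    simp only [commutatorElement_def]
    group
  rw [e]
  exact H.mul_mem h₁ (hb₁ _ h₂)

theorem commutator_iSup_right_le {ι : Sort*} {M : Type*} [Group M] {G H L : Subgroup M}
    {K : ι → Subgroup M} (hG : ∀ g ∈ G, ∀ h ∈ H, g * h * g⁻¹ ∈ H) (hKG : ∀ j, K j ≤ G)
    (hK : ∀ j, ⁅L, K j⁆ ≤ H) : ⁅L, ⨆ j, K j⁆ ≤ H := by
  rw [Subgroup.commutator_le]
  intro a ha b hb
  refine (Subgroup.iSup_induction K (C := fun b => b ∈ G ∧ ⁅a, b⁆ ∈ H) hb ?_ ?_ ?_).2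
  · exact fun j x hx => ⟨hKG j hx, hK j (Subgroup.commutator_mem_commutator ha hx)⟩
  · exact ⟨G.one_mem, by simp [H.one_mem]⟩
  · exact fun x y ⟨hxG, hx⟩ ⟨hyG, hy⟩ =>
      ⟨G.mul_mem hxG hyG, commutatorElement_mul_right_mem (hG x hxG) hx hy⟩

theorem commutator_iSup_le {ι : Sort*} {M : Type*} [Group M] {G H : Subgroup M}
    {K : ι → Subgroup M} (hG : ∀ g ∈ G, ∀ h ∈ H, g * h * g⁻¹ ∈ H) (hKG : ∀ j, K j ≤ G)
    (hK : ∀ i j, ⁅K i, K j⁆ ≤ H) : ⁅⨆ i, K i, ⨆ j, K j⁆ ≤ H :=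
  commutator_iSup_right_le hG hKG fun j => by
    rw [Subgroup.commutator_comm]
    exact commutator_iSup_right_le hG hKG (hK j)

namespace Vtx

theorem not_pre_of_pre {k : ℕ} {u u' w : Vtx A k} (hlen : u.len = u'.len) (hne : u ≠ u')
    (hu : Pre u w) : ¬ Pre u' w := fun hu' =>
  hne (Subtype.ext ((List.prefix_of_prefix_length_le hu hu' hlen.le).eq_of_length hlen))

end Vtx

section Rist

variable {k : ℕ} {G : Subgroup (Equiv.Perm (Vtx A k))}

theorem rist_disjoint {u u' : Vtx A k} (hlen : u.len = u'.len) (hne : u ≠ u')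
    {a b : Equiv.Perm (Vtx A k)} (ha : a ∈ rist G u) (hb : b ∈ rist G u') :
    a.Disjoint b := by
  intro w
  by_cases hw : Vtx.Pre u w
  · exact Or.inr (hb.2 w (Vtx.not_pre_of_pre hlen hne hw))
  · exact Or.inl (ha.2 w hw)

theorem conj_mem_rist (hGaut : G ≤ treeAut A k) {h s : Equiv.Perm (Vtx A k)} (hh : h ∈ G)
    {v : Vtx A k} (hs : s ∈ rist G v) : h * s * h⁻¹ ∈ rist G (h v) := by
  refine ⟨G.mul_mem (G.mul_mem hh hs.1) (G.inv_mem hh), fun w hw => ?_⟩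
  have hpre : ¬ Vtx.Pre v (h⁻¹ w) := by
    rwa [← (hGaut hh).2, show h (h⁻¹ w) = w from h.apply_symm_apply w]
  rw [Equiv.Perm.mul_apply, Equiv.Perm.mul_apply, hs.2 _ hpre]
  exact h.apply_symm_apply w

theorem commutatorElement_mem_of_mem_rist {H : Subgroup (Equiv.Perm (Vtx A k))}
    (hGaut : G ≤ treeAut A k) (hHG : H ≤ G) {v : Vtx A k} {h : Equiv.Perm (Vtx A k)}
    (hh : h ∈ H) (hhv : h v ≠ v) {r s : Equiv.Perm (Vtx A k)} (hr : r ∈ rist G v)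
    (hs : s ∈ rist G v) (hrH : ∀ x ∈ H, r * x * r⁻¹ ∈ H) (hsH : ∀ x ∈ H, s * x * s⁻¹ ∈ H) :
    ⁅r, s⁆ ∈ H :=
  commutatorElement_mem_of_commute hrH
    (by simpa only [mul_assoc] using H.mul_mem (hsH h hh) (H.inv_mem hh))
    (rist_disjoint ((hGaut (hHG hh)).1 v).symm (Ne.symm hhv) hr
      (conj_mem_rist hGaut (hHG hh) (inv_mem hs))).commute

theorem commutator_le_of_le_rist {H R : Subgroup (Equiv.Perm (Vtx A k))}
    (hGaut : G ≤ treeAut A k) (hHG : H ≤ G) {v : Vtx A k} (hv : ∃ h ∈ H, h v ≠ v)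
    (hR : R ≤ rist G v) (hnorm : ∀ r ∈ R, ∀ h ∈ H, r * h * r⁻¹ ∈ H) : ⁅R, R⁆ ≤ H := by
  obtain ⟨h, hh, hhv⟩ := hv
  rw [Subgroup.commutator_le]
  exact fun r hr s hs =>
    commutatorElement_mem_of_mem_rist hGaut hHG hh hhv (hR hr) (hR hs) (hnorm r hr) (hnorm s hs)

theorem exists_mem_apply_ne_of_sphTrans {H : Subgroup (Equiv.Perm (Vtx A k))}
    (hN : ∀ g ∈ G, ∀ h ∈ H, g * h * g⁻¹ ∈ H) (htrans : SphTrans G) {v : Vtx A k}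
    (hv : ∃ h ∈ H, h v ≠ v) {u : Vtx A k} (hu : u.len = v.len) : ∃ h ∈ H, h u ≠ u := by
  obtain ⟨h, hh, hhv⟩ := hv
  obtain ⟨g, hg, rfl⟩ := htrans v u hu.symm
  refine ⟨g * h * g⁻¹, hN g hg h hh, fun heq => hhv (g.injective ?_)⟩
  simpa using heq

theorem commutator_ristLev_le {H : Subgroup (Equiv.Perm (Vtx A k))}
    (hGaut : G ≤ treeAut A k) (hHG : H ≤ G) (hN : ∀ g ∈ G, ∀ h ∈ H, g * h * g⁻¹ ∈ H)
    {n : ℕ} (hmoves : ∀ u : Vtx A k, u.len = n → ∃ h ∈ H, h u ≠ u) :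
    ⁅ristLev G n, ristLev G n⁆ ≤ H := by
  rw [ristLev, iSup_subtype']
  refine commutator_iSup_le hN (fun _ _ hx => hx.1) ?_
  rintro ⟨u, hu⟩ ⟨u', hu'⟩
  by_cases he : u = u'
  · subst he
    exact commutator_le_of_le_rist hGaut hHG (hmoves u hu) le_rfl fun r hr => hN r hr.1
  · rw [Subgroup.commutator_le]
    intro a ha b hb
    rw [commutatorElement_eq_one_iff_commute.mpr
      (rist_disjoint (hu.trans hu'.symm) he ha hb).commute]
    exact H.one_mem

end Rist

theorem commutator_rist_le_of_normalised_general
    (A : ℕ → Type*)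
    (G H R : Subgroup (Equiv.Perm (Vtx A 0)))
    (hGaut : G ≤ treeAut A 0) (hHG : H ≤ G)
    (v : Vtx A 0) (hv : ∃ h ∈ H, h v ≠ v)
    (hR : R ≤ rist G v) (hnorm : ∀ r ∈ R, ∀ h ∈ H, r * h * r⁻¹ ∈ H) :
    ⁅R, R⁆ ≤ H ∧
      ((∀ g ∈ G, ∀ h ∈ H, g * h * g⁻¹ ∈ H) → SphTrans G →
        ⁅ristLev G v.len, ristLev G v.len⁆ ≤ H) :=
  ⟨commutator_le_of_le_rist hGaut hHG hv hR hnorm, fun hN htrans =>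
    commutator_ristLev_le hGaut hHG hN fun _ hu => exists_mem_apply_ne_of_sphTrans hN htrans hv hu⟩

/-- If `H ≤ G ≤ Aut(T)` is nontrivial, `v` is a vertex whose `H`-orbit is not `{v}`,
and `R ≤ rist_G(v)` normalises `H`, then `[R, R] ≤ H`.  In particular, if `H` is normal
in `G` and `G` acts spherically transitively, then `rist_G'(|v|) ≤ H`. -/
theorem commutator_rist_le_of_normalised
    (A : ℕ → Type*) [∀ i, Fintype (A i)] (hA : ∀ i, 2 ≤ Fintype.card (A i))
    (G H R : Subgroup (Equiv.Perm (Vtx A 0)))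
    (hGaut : G ≤ treeAut A 0) (hHG : H ≤ G) (hH : H ≠ ⊥)
    (v : Vtx A 0) (hv : ∃ h ∈ H, h v ≠ v)
    (hR : R ≤ rist G v) (hnorm : ∀ r ∈ R, ∀ h ∈ H, r * h * r⁻¹ ∈ H) :
    ⁅R, R⁆ ≤ H ∧
      ((∀ g ∈ G, ∀ h ∈ H, g * h * g⁻¹ ∈ H) → SphTrans G →
        ⁅ristLev G v.len, ristLev G v.len⁆ ≤ H) :=
  commutator_rist_le_of_normalised_general A G H R hGaut hHG v hv hR hnorm
end

section
/- Let T be a spherically homogeneous rooted tree, let G ≤ Aut(T) be a weakly branch group, let H ≤ G be a subgroup of finite index in G, and let K be a normal subgroup of H such that rist_K(v) is nontrivial for every vertex v of T. Then there exists n ∈ ℕ such that rist_G'(n) ≤ K. -/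
open scoped Pointwise

variable {A : ℕ → Type*}

/-!
Let `L ≤ K` be the core of `K` in `G`. If some `g ∈ L` moves a vertex `y`, put `n = |y|`.
For `a, b ∈ rist_G(z)` with `|z| = n`, a `G`-conjugate `g'` of `g` moves `z`, so `g' a g'⁻¹` is
supported away from `z` and commutes with `b`; hence `⁅a, b⁆ = ⁅a g' a⁻¹ g'⁻¹, b⁆ ∈ L`. Rigid
stabilisers of distinct vertices of level `n` commute, so `rist_G(n)' ≤ L ≤ K`.

That `L` is nontrivial: products of nontrivial elements of `K` supported on infinitely many
disjoint subtrees below a vertex are pairwise distinct, so two of them lie in the same coset of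
`N = Core_G(H)`, and `K ∩ N` has nontrivial rigid stabilisers. Its `G`-conjugates are finitely
many, lie in `N` and are normalised by `N`; the commutator of two such subgroups lies in their
intersection and again has nontrivial rigid stabilisers, so the intersection of all the
conjugates, which lies in `L`, is nontrivial.
-/

open Equiv (Perm)

namespace Vtx

variable {A : ℕ → Type*} {k : ℕ} {u v w : Vtx A k}

theorem Pre.trans (huv : Pre u v) (hvw : Pre v w) : Pre u w :=
  List.IsPrefix.trans huv hvw

theorem pre_or_pre_of_pre (hu : Pre u w) (hv : Pre v w) : Pre u v ∨ Pre v u :=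
  (Nat.le_total u.len v.len).imp (List.prefix_of_prefix_length_le hu hv)
    (List.prefix_of_prefix_length_le hv hu)

theorem eq_of_pre_of_len_eq (h : Pre u v) (hl : u.len = v.len) : u = v :=
  Subtype.ext (h.eq_of_length hl)

theorem not_pre_of_len_eq_of_ne (hl : u.len = v.len) (hne : u ≠ v) : ¬ Pre u v :=
  fun h => hne (eq_of_pre_of_len_eq h hl)

theorem eq_of_pre_of_pre_of_len_eq (hu : Pre u w) (hv : Pre v w) (hl : u.len = v.len) :
    u = v :=
  (pre_or_pre_of_pre hu hv).elim (eq_of_pre_of_len_eq · hl)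
    fun h => (eq_of_pre_of_len_eq h hl.symm).symm

theorem exists_pairwise_not_pre [∀ i, Nontrivial (A i)] (v : Vtx A 0) :
    ∃ w : ℕ → Vtx A 0, (∀ i, Pre v (w i)) ∧ Pairwise fun i j => ¬ Pre (w i) (w j) := by
  choose a b hab using fun i => exists_pair_ne (A i)
  -- `w i = v aⁱ b`
  let word (i : ℕ) : Vtx A v.len :=
    ⟨List.ofFn fun j : Fin (i + 1) => ⟨j + v.len, if j < i then a _ else b _⟩,
      fun _ _ => by simp only [List.getElem_ofFn]⟩
  refine ⟨fun i => cat v (word i), fun i => pre_cat v (word i), fun i j hij hpre => ?_⟩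
  have hword : (word i).1 <+: (word j).1 := (List.prefix_append_right_inj v.1).mp hpre
  rcases lt_or_gt_of_ne hij with h | h
  · have := hword.getElem (i := i) (by simp [word])
    simp only [word, List.getElem_ofFn, h, lt_irrefl, if_true, if_false, Sigma.mk.injEq,
      heq_eq_eq, true_and] at this
    exact hab _ this.symm
  · have := hword.length_le
    simp only [word, List.length_ofFn] at this
    omega

end Vtx

section RigidStabiliser

variable {A : ℕ → Type*} {k : ℕ} {S T : Subgroup (Perm (Vtx A k))} {c g h : Perm (Vtx A k)}
  {u v w : Vtx A k}

theorem len_apply_of_mem_treeAut (hc : c ∈ treeAut A k) (v : Vtx A k) : (c v).len = v.len :=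
  hc.1 v

theorem pre_apply_iff_of_mem_treeAut (hc : c ∈ treeAut A k) :
    Vtx.Pre (c v) (c w) ↔ Vtx.Pre v w :=
  hc.2 v w

theorem rist_le_self : rist S v ≤ S := fun _ hg => hg.1

theorem rist_mono (hST : S ≤ T) : rist S v ≤ rist T v := fun _ hg => ⟨hST hg.1, hg.2⟩

theorem rist_anti_of_pre (huv : Vtx.Pre u v) : rist S v ≤ rist S u :=
  fun _ hg => ⟨hg.1, fun w hw => hg.2 w fun hvw => hw (huv.trans hvw)⟩

theorem mem_rist_of_mem_rist_top (hgS : g ∈ S) (hg : g ∈ rist ⊤ v) : g ∈ rist S v :=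
  ⟨hgS, hg.2⟩

theorem apply_eq_of_mem_rist (hg : g ∈ rist S v) (hw : ¬ Vtx.Pre v w) : g w = w :=
  hg.2 w hw

theorem pre_of_apply_ne (hg : g ∈ rist S v) (hw : g w ≠ w) : Vtx.Pre v w :=
  not_not.mp (mt (apply_eq_of_mem_rist hg) hw)

theorem pre_apply_of_mem_rist (hg : g ∈ rist S v) (hw : Vtx.Pre v w) : Vtx.Pre v (g w) := by
  by_contra h
  have : g⁻¹ (g w) = g w := apply_eq_of_mem_rist ((rist S v).inv_mem hg) h
  simp only [Perm.coe_inv, Equiv.symm_apply_apply] at this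
  exact h (this ▸ hw)

theorem conj_mem_rist_top (hc : c ∈ treeAut A k) (hg : g ∈ rist ⊤ v) :
    c * g * c⁻¹ ∈ rist ⊤ (c v) := by
  refine ⟨trivial, fun w hw => ?_⟩
  have : ¬ Vtx.Pre v (c⁻¹ w) := fun h =>
    hw (by simpa using (pre_apply_iff_of_mem_treeAut hc).mpr h)
  rw [Perm.mul_apply, Perm.mul_apply, apply_eq_of_mem_rist hg this]
  exact c.apply_symm_apply w

theorem commute_of_mem_rist (hg : g ∈ rist S u) (hh : h ∈ rist T v) (huv : ¬ Vtx.Pre u v)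
    (hvu : ¬ Vtx.Pre v u) : Commute g h := by
  have hdisj : ∀ w, Vtx.Pre u w → ¬ Vtx.Pre v w := fun w hu hv =>
    (Vtx.pre_or_pre_of_pre hu hv).elim huv hvu
  refine Equiv.ext fun w => ?_
  simp only [Perm.mul_apply]
  by_cases hu : Vtx.Pre u w
  · rw [apply_eq_of_mem_rist hh (hdisj w hu),
      apply_eq_of_mem_rist hh (hdisj _ (pre_apply_of_mem_rist hg hu))]
  by_cases hv : Vtx.Pre v w
  · rw [apply_eq_of_mem_rist hg hu,
      apply_eq_of_mem_rist hg fun h' => hdisj _ h' (pre_apply_of_mem_rist hh hv)]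
  · rw [apply_eq_of_mem_rist hg hu, apply_eq_of_mem_rist hh hv, apply_eq_of_mem_rist hg hu]

end RigidStabiliser

open scoped commutatorElement

namespace Subgroup

variable {M : Type*} [Group M] {G H K L S T : Subgroup M} {a b c g x : M}

theorem ne_bot_iff_exists_mem_ne_one : S ≠ ⊥ ↔ ∃ x ∈ S, x ≠ 1 := by
  simp [Ne, eq_bot_iff_forall]

theorem commutator_le_inf_of_le_normalizer (hST : S ≤ normalizer T) (hTS : T ≤ normalizer S) :
    ⁅S, T⁆ ≤ S ⊓ T := by
  rw [commutator_le]
  intro s hs t ht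
  rw [commutatorElement_def]
  refine mem_inf.mpr ⟨?_, T.mul_mem ((mem_normalizer_iff.mp (hST hs) t).mp ht) (T.inv_mem ht)⟩
  simpa only [mul_assoc] using
    S.mul_mem hs ((mem_normalizer_iff.mp (hTS ht) s⁻¹).mp (S.inv_mem hs))

theorem commutatorElement_mem_of_commute (ha : a ∈ normalizer L) (hb : b ∈ normalizer L)
    (hg : g ∈ L) (hcomm : Commute (g * a * g⁻¹) b) : ⁅a, b⁆ ∈ L := by
  have ht : a * g * a⁻¹ * g⁻¹ ∈ L := L.mul_mem ((mem_normalizer_iff.mp ha g).mp hg) (L.inv_mem hg)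
  have key : ⁅a, b⁆ = (a * g * a⁻¹ * g⁻¹) * (b * (a * g * a⁻¹ * g⁻¹)⁻¹ * b⁻¹) :=
    calc ⁅a, b⁆ = a * g * a⁻¹ * g⁻¹ * ((g * a * g⁻¹) * b) * a⁻¹ * b⁻¹ := by
          rw [commutatorElement_def]; group
      _ = a * g * a⁻¹ * g⁻¹ * (b * (g * a * g⁻¹)) * a⁻¹ * b⁻¹ := by rw [hcomm.eq]
      _ = _ := by group
  rw [key]
  exact L.mul_mem ht ((mem_normalizer_iff.mp hb _).mp (L.inv_mem ht))

theorem commutator_iSup_le {ι κ : Sort*} {R : ι → Subgroup M} {R' : κ → Subgroup M}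
    (hR : ∀ i, R i ≤ normalizer L) (hR' : ∀ j, R' j ≤ normalizer L)
    (h : ∀ i j, ⁅R i, R' j⁆ ≤ L) : ⁅⨆ i, R i, ⨆ j, R' j⁆ ≤ L := by
  have hleft : ∀ i, ∀ x ∈ R i, ∀ y ∈ ⨆ j, R' j, ⁅x, y⁆ ∈ L := by
    intro i x hx y hy
    induction hy using iSup_induction' with
    | hp j y hy => exact commutator_le.mp (h i j) x hx y hy
    | h1 => simp
    | hmul y y' hy _ ihy ihy' =>
      have : ⁅x, y * y'⁆ = ⁅x, y⁆ * (y * ⁅x, y'⁆ * y⁻¹) := by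
        simp only [commutatorElement_def]; group
      rw [this]
      exact L.mul_mem ihy ((mem_normalizer_iff.mp (iSup_le hR' hy) _).mp ihy')
  rw [commutator_le]
  intro x hx y hy
  induction hx using iSup_induction' with
  | hp i x hx => exact hleft i x hx y hy
  | h1 => simp
  | hmul x x' hx _ ihx ihx' =>
    have : ⁅x * x', y⁆ = x * ⁅x', y⁆ * x⁻¹ * ⁅x, y⁆ := by
      simp only [commutatorElement_def]; group
    rw [this]
    exact L.mul_mem ((mem_normalizer_iff.mp (iSup_le hR hx) _).mp ihx') ihx

theorem exists_ne_inv_mul_mem_of_relIndex_ne_zero (hN : L.relIndex K ≠ 0) {p : ℕ → M}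
    (hp : ∀ n, p n ∈ K) : ∃ i j, i ≠ j ∧ (p i)⁻¹ * p j ∈ L := by
  have : (L.subgroupOf K).FiniteIndex := ⟨hN⟩
  obtain ⟨i, j, hij, h⟩ := Finite.exists_ne_map_eq_of_infinite
    fun n => (QuotientGroup.mk ⟨p n, hp n⟩ : K ⧸ L.subgroupOf K)
  exact ⟨i, j, hij, by simpa [mem_subgroupOf] using QuotientGroup.eq.mp h⟩

theorem mem_conj_smul_iff : x ∈ MulAut.conj c • S ↔ c⁻¹ * x * c ∈ S := by
  simp [mem_pointwise_smul_iff_inv_smul_mem]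

theorem conj_smul_eq_self_of_mem_normalizer (hc : c ∈ normalizer S) : MulAut.conj c • S = S := by
  ext x
  rw [mem_conj_smul_iff]
  exact (mem_normalizer_iff''.mp hc x).symm

theorem normalizer_conj_smul :
    normalizer (MulAut.conj c • S) = MulAut.conj c • normalizer (S : Set M) :=
  (map_equiv_normalizer_eq S (MulAut.conj c)).symm

theorem finite_conj_smul_image (hH : H ≤ normalizer S) (hHG : H.relIndex G ≠ 0) :
    ((fun c => MulAut.conj c • S) '' (G : Set M)).Finite := by
  have : (H.subgroupOf G).FiniteIndex := ⟨hHG⟩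
  refine (Set.finite_range fun q : G ⧸ H.subgroupOf G => MulAut.conj (q.out : M) • S).subset ?_
  rintro _ ⟨c, hc, rfl⟩
  obtain ⟨h, hh⟩ := QuotientGroup.mk_out_eq_mul (H.subgroupOf G) ⟨c, hc⟩
  refine ⟨QuotientGroup.mk ⟨c, hc⟩, ?_⟩
  simp only [hh, coe_mul, map_mul, mul_smul,
    conj_smul_eq_self_of_mem_normalizer (hH (mem_subgroupOf.mp h.2))]

def relCore (G K : Subgroup M) : Subgroup M :=
  (K.subgroupOf G).normalCore.map G.subtype

theorem mem_relCore : x ∈ relCore G K ↔ x ∈ G ∧ ∀ c ∈ G, c * x * c⁻¹ ∈ K := by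
  simp [relCore, normalCore, mem_subgroupOf, and_comm]

theorem relCore_le_left : relCore G K ≤ G := fun _ hx => (mem_relCore.mp hx).1

theorem relCore_le : relCore G K ≤ K := fun x hx => by
  simpa using (mem_relCore.mp hx).2 1 G.one_mem

theorem le_normalizer_relCore : G ≤ normalizer (relCore G K) := by
  calc G = (⊤ : Subgroup G).map G.subtype := by rw [← MonoidHom.range_eq_map, range_subtype]
    _ = (normalizer ((K.subgroupOf G).normalCore : Set G)).map G.subtype := by
      rw [normalizer_eq_top]
    _ ≤ normalizer (relCore G K) := le_normalizer_map _

theorem relIndex_relCore_ne_zero (h : K.relIndex G ≠ 0) : (relCore G K).relIndex G ≠ 0 := by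
  have : (K.subgroupOf G).FiniteIndex := ⟨h⟩
  rw [relIndex, relCore, subgroupOf, comap_map_eq_self_of_injective G.subtype_injective]
  exact FiniteIndex.index_ne_zero

end Subgroup

theorem Equiv.Perm.exists_apply_ne_of_ne_one {α : Type*} {g : Perm α} (h : g ≠ 1) :
    ∃ x, g x ≠ x :=
  not_forall.mp fun h' => h (Equiv.ext h')

theorem NormalIn.le_normalizer {M : Type*} [Group M] {H K : Subgroup M} (hK : NormalIn H K) :
    H ≤ Subgroup.normalizer K := by
  intro h hh
  refine Subgroup.mem_normalizer_iff.mpr fun x => ⟨hK.2 h hh x, fun hx => ?_⟩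
  simpa [mul_assoc] using hK.2 h⁻¹ (H.inv_mem hh) _ hx

open Subgroup

section NontrivialRists

variable {A : ℕ → Type*} {k : ℕ} {S T C : Subgroup (Perm (Vtx A k))}

def HasNontrivialRists (S : Subgroup (Perm (Vtx A k))) : Prop :=
  ∀ v, rist S v ≠ ⊥

theorem HasNontrivialRists.mono (hS : HasNontrivialRists S) (hST : S ≤ T) :
    HasNontrivialRists T :=
  fun v => ne_bot_of_le_ne_bot (hS v) (rist_mono hST)

theorem HasNontrivialRists.conj_smul {c : Perm (Vtx A k)} (hc : c ∈ treeAut A k)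
    (hS : HasNontrivialRists S) : HasNontrivialRists (MulAut.conj c • S) := by
  intro v
  obtain ⟨x, hx, hx1⟩ := ne_bot_iff_exists_mem_ne_one.mp (hS (c⁻¹ v))
  refine ne_bot_iff_exists_mem_ne_one.mpr ⟨c * x * c⁻¹, ⟨?_, ?_⟩, conj_eq_one_iff.not.mpr hx1⟩
  · rw [mem_conj_smul_iff]
    simpa [mul_assoc] using rist_le_self hx
  · simpa using (conj_mem_rist_top hc (rist_mono le_top hx)).2

theorem HasNontrivialRists.commutator (hS : S ≤ treeAut A k) (hSr : HasNontrivialRists S)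
    (hTr : HasNontrivialRists T) : HasNontrivialRists ⁅S, T⁆ := by
  intro v
  obtain ⟨x, hx, hx1⟩ := ne_bot_iff_exists_mem_ne_one.mp (hSr v)
  obtain ⟨y, hy⟩ := Perm.exists_apply_ne_of_ne_one hx1
  obtain ⟨g, hg, hg1⟩ := ne_bot_iff_exists_mem_ne_one.mp (hTr y)
  obtain ⟨z, hz⟩ := Perm.exists_apply_ne_of_ne_one hg1
  have hxaut : x ∈ treeAut A k := hS (rist_le_self hx)
  have hxv : x ∈ rist ⊤ v := rist_mono le_top hx
  have hgv : g ∈ rist ⊤ v := rist_mono le_top (rist_anti_of_pre (pre_of_apply_ne hx hy) hg)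
  refine ne_bot_iff_exists_mem_ne_one.mpr ⟨⁅x, g⁆, mem_rist_of_mem_rist_top
    (commutator_mem_commutator (rist_le_self hx) (rist_le_self hg)) ?_, ?_⟩
  · rw [commutatorElement_def]
    exact mul_mem (mul_mem (mul_mem hxv hgv) (inv_mem hxv)) (inv_mem hgv)
  rw [Ne, commutatorElement_eq_one_iff_commute]
  intro hcomm
  -- `g` would move `x z`, a vertex below both `y` and `x y`
  have hmoved : g (x z) ≠ x z := by
    rw [← Perm.mul_apply, ← hcomm.eq, Perm.mul_apply]
    exact fun h => hz (x.injective h)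
  exact hy (Vtx.eq_of_pre_of_pre_of_len_eq
    ((pre_apply_iff_of_mem_treeAut hxaut).mpr (pre_of_apply_ne hg hz))
    (pre_of_apply_ne hg hmoved) (len_apply_of_mem_treeAut hxaut y))

theorem HasNontrivialRists.inf (hST : S ≤ normalizer T) (hTS : T ≤ normalizer S)
    (hS : S ≤ treeAut A k) (hSr : HasNontrivialRists S) (hTr : HasNontrivialRists T) :
    HasNontrivialRists (S ⊓ T) :=
  (hSr.commutator hS hTr).mono (commutator_le_inf_of_le_normalizer hST hTS)

theorem HasNontrivialRists.inf_sInf (hC : C ≤ treeAut A k) {𝒮 : Set (Subgroup (Perm (Vtx A k)))}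
    (h𝒮 : 𝒮.Finite) (h𝒮C : ∀ S ∈ 𝒮, S ≤ C ∧ C ≤ normalizer S ∧ HasNontrivialRists S)
    (hTC : T ≤ C) (hCT : C ≤ normalizer T) (hT : HasNontrivialRists T) :
    HasNontrivialRists (T ⊓ sInf 𝒮) := by
  induction 𝒮, h𝒮 using Set.Finite.induction_on generalizing T with
  | empty => simpa using hT
  | @insert S 𝒮 _ _ ih =>
    obtain ⟨hSC, hCS, hS⟩ := h𝒮C S (Set.mem_insert S 𝒮)
    rw [sInf_insert, ← inf_assoc]
    exact ih (fun S' hS' => h𝒮C S' (Set.mem_insert_of_mem S hS')) (inf_le_of_left_le hTC)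
      ((le_inf hCT hCS).trans inf_normalizer_le_normalizer_inf)
      (hT.inf (hTC.trans hCS) (hSC.trans hCT) (hTC.trans hC) hS)

theorem list_prod_range_map_apply {g : ℕ → Perm (Vtx A k)} {w : ℕ → Vtx A k}
    (hg : ∀ i, g i ∈ rist ⊤ (w i)) (hw : Pairwise fun i j => ¬ Vtx.Pre (w i) (w j)) {j : ℕ}
    (n : ℕ) {x : Vtx A k} (hx : Vtx.Pre (w j) x) :
    ((List.range n).map g).prod x = if j < n then g j x else x := by
  induction n generalizing x with
  | zero => simp
  | succ n ih =>
    rw [List.range_succ, List.map_append, List.prod_append, Perm.mul_apply]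
    simp only [List.map_cons, List.map_nil, List.prod_cons, List.prod_nil, mul_one]
    by_cases hnj : n = j
    · subst hnj
      simp [ih (pre_apply_of_mem_rist (hg n) hx)]
    · have hnx : ¬ Vtx.Pre (w n) x := fun h =>
        (Vtx.pre_or_pre_of_pre h hx).elim (hw hnj) (hw (Ne.symm hnj))
      rw [apply_eq_of_mem_rist (hg n) hnx, ih hx]
      simp only [show j < n + 1 ↔ j < n by omega]

theorem HasNontrivialRists.inf_of_relIndex_ne_zero [∀ i, Nontrivial (A i)]
    {K N : Subgroup (Perm (Vtx A 0))} (hK : HasNontrivialRists K) (hN : N.relIndex K ≠ 0) :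
    HasNontrivialRists (K ⊓ N) := by
  intro v
  obtain ⟨w, hvw, hw⟩ := Vtx.exists_pairwise_not_pre v
  choose g hg hg1 using fun i => ne_bot_iff_exists_mem_ne_one.mp (hK (w i))
  -- the partial products are pairwise distinct, so two of them share an `N`-coset
  let p (n : ℕ) : Perm (Vtx A 0) := ((List.range n).map g).prod
  have hp (n : ℕ) : p n ∈ rist K v :=
    list_prod_mem (by simpa using fun i _ => rist_anti_of_pre (hvw i) (hg i))
  have hp_inj : p.Injective := Function.Injective.of_lt_imp_ne fun i j hij hpij => by
    obtain ⟨x, hx⟩ := Perm.exists_apply_ne_of_ne_one (hg1 i)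
    have := congrArg (· x) hpij
    simp only [p, list_prod_range_map_apply (fun i => rist_mono le_top (hg i)) hw _
      (pre_of_apply_ne (hg i) hx), lt_irrefl, hij, if_true, if_false] at this
    exact hx this.symm
  obtain ⟨i, j, hij, hN'⟩ :=
    exists_ne_inv_mul_mem_of_relIndex_ne_zero hN fun n => rist_le_self (hp n)
  have hq : (p i)⁻¹ * p j ∈ rist K v := mul_mem (inv_mem (hp i)) (hp j)
  exact ne_bot_iff_exists_mem_ne_one.mpr
    ⟨_, ⟨⟨hq.1, hN'⟩, hq.2⟩, fun h => hij (hp_inj (inv_mul_eq_one.mp h))⟩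

theorem hasNontrivialRists_relCore [∀ i, Nontrivial (A i)] {G H K : Subgroup (Perm (Vtx A 0))}
    (hG : G ≤ treeAut A 0) (hHG : H ≤ G) (hfi : H.relIndex G ≠ 0) (hK : NormalIn H K)
    (hKr : HasNontrivialRists K) : HasNontrivialRists (relCore G K) := by
  set C := relCore G H
  set K₀ := K ⊓ C
  have hCG : C ≤ G := relCore_le_left
  have hGC : G ≤ normalizer C := le_normalizer_relCore
  have hK₀ : HasNontrivialRists K₀ := hKr.inf_of_relIndex_ne_zero fun h =>
    relIndex_relCore_ne_zero hfi (relIndex_eq_zero_of_le_right (hK.1.trans hHG) h)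
  have hHK₀ : H ≤ normalizer K₀ :=
    (le_inf hK.le_normalizer (hHG.trans hGC)).trans inf_normalizer_le_normalizer_inf
  have hconj : ∀ S ∈ (fun c => MulAut.conj c • K₀) '' (G : Set (Perm (Vtx A 0))),
      S ≤ C ∧ C ≤ normalizer S ∧ HasNontrivialRists S := by
    rintro _ ⟨c, hc, rfl⟩
    have hcC : MulAut.conj c • C = C := conj_smul_eq_self_of_mem_normalizer (hGC hc)
    refine ⟨?_, ?_, hK₀.conj_smul (hG hc)⟩
    · calc MulAut.conj c • K₀ ≤ MulAut.conj c • C :=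
            pointwise_smul_le_pointwise_smul_iff.mpr inf_le_right
        _ = C := hcC
    · calc C = MulAut.conj c • C := hcC.symm
        _ ≤ MulAut.conj c • normalizer K₀ :=
            pointwise_smul_le_pointwise_smul_iff.mpr (relCore_le.trans hHK₀)
        _ = normalizer (MulAut.conj c • K₀) := normalizer_conj_smul.symm
  refine (hK₀.inf_sInf (hCG.trans hG) (finite_conj_smul_image hHK₀ hfi) hconj inf_le_right
    (relCore_le.trans hHK₀)).mono fun x hx => mem_relCore.mpr ⟨hCG hx.1.2, fun c hc => ?_⟩
  have := sInf_le (Set.mem_image_of_mem (fun c => MulAut.conj c • K₀) (inv_mem hc)) hx.2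
  rw [mem_conj_smul_iff, inv_inv] at this
  exact this.1

theorem commutator_ristLev_le_s9 {G L : Subgroup (Perm (Vtx A 0))} (hG : G ≤ treeAut A 0)
    (htrans : SphTrans G) (hGL : G ≤ normalizer L) {g : Perm (Vtx A 0)} (hgL : g ∈ L)
    (hg : g ∈ treeAut A 0) {y : Vtx A 0} (hy : g y ≠ y) :
    ⁅ristLev G y.len, ristLev G y.len⁆ ≤ L := by
  rw [ristLev, iSup_subtype']
  refine commutator_iSup_le (fun _ => rist_le_self.trans hGL) (fun _ => rist_le_self.trans hGL) ?_
  rintro ⟨z, hz⟩ ⟨z', hz'⟩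
  rw [commutator_le]
  intro a ha b hb
  by_cases hzz : z = z'
  · subst hzz
    obtain ⟨c, hc, rfl⟩ := htrans y z hz.symm
    -- a conjugate of `g` moves `c y`, and conjugating `a` by it separates it from `b`
    have hg'aut : c * g * c⁻¹ ∈ treeAut A 0 := mul_mem (mul_mem (hG hc) hg) (inv_mem (hG hc))
    have hmoved : (c * g * c⁻¹) (c y) ≠ c y := by simpa using hy
    have hlen := len_apply_of_mem_treeAut hg'aut (c y)
    refine commutatorElement_mem_of_commute (hGL (rist_le_self ha)) (hGL (rist_le_self hb))
      ((mem_normalizer_iff.mp (hGL hc) g).mp hgL) ?_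
    exact commute_of_mem_rist (conj_mem_rist_top hg'aut (rist_mono le_top ha)) hb
      (Vtx.not_pre_of_len_eq_of_ne hlen hmoved) (Vtx.not_pre_of_len_eq_of_ne hlen.symm hmoved.symm)
  · have hlen : z.len = z'.len := hz.trans hz'.symm
    rw [commutatorElement_eq_one_iff_commute.mpr (commute_of_mem_rist ha hb
      (Vtx.not_pre_of_len_eq_of_ne hlen hzz) (Vtx.not_pre_of_len_eq_of_ne hlen.symm (Ne.symm hzz)))]
    exact L.one_mem

end NontrivialRists

/-- Let `G` be a weakly branch group, `H ≤ G` of finite index, and `K` a normal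
subgroup of `H` such that `rist_K(v)` is nontrivial for every vertex `v`. Then there
exists `n` with `rist_G'(n) ≤ K`. -/
theorem rist_derived_le_of_rist_ne_bot
    (A : ℕ → Type*) [∀ i, Fintype (A i)] (hA : ∀ i, 2 ≤ Fintype.card (A i))
    (G H K : Subgroup (Equiv.Perm (Vtx A 0))) (hG : IsWeaklyBranch G)
    (hHG : H ≤ G) (hfi : H.relIndex G ≠ 0) (hK : NormalIn H K)
    (hrist : ∀ v : Vtx A 0, rist K v ≠ ⊥) :
    ∃ n : ℕ, ⁅ristLev G n, ristLev G n⁆ ≤ K := by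
  have : ∀ i, Nontrivial (A i) := fun i => Fintype.one_lt_card_iff_nontrivial.mp (hA i)
  have hL := hasNontrivialRists_relCore hG.le_aut hHG hfi hK hrist
  obtain ⟨g, hg, hg1⟩ := ne_bot_iff_exists_mem_ne_one.mp (hL ⟨[], fun _ h => by simp at h⟩)
  obtain ⟨y, hy⟩ := Perm.exists_apply_ne_of_ne_one hg1
  have hgL := rist_le_self hg
  exact ⟨y.len, (commutator_ristLev_le_s9 hG.le_aut hG.trans le_normalizer_relCore hgL
    (hG.le_aut (relCore_le_left hgL)) hy).trans relCore_le⟩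
end

section
/- Let T be a spherically homogeneous rooted tree, let G ≤ Aut(T) be a group of automorphisms of T, and let H ≤ G be a subgroup. For n ∈ ℕ, define ν_n : St_G(n) → ℕ by ν_n(g) = |{v ∈ L_n : φ_v(g) ∈ H_v}|, where H_v = φ_v(St_H(v)). Then ν_n is an invariant of double cosets: for all g_1, g_2 ∈ St_G(n) with H g_1 H = H g_2 H, one has ν_n(g_1) = ν_n(g_2). -/
open scoped Pointwise

variable {A : ℕ → Type*}

/-! For `g` fixing `v`, `φ_v(g) ∈ H_v` says exactly that some element of `H` agrees with `g` on
the subtree below `v`. In this form the condition is transported along the double coset: if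
`g₂ = a g₁ c` with `a, c ∈ H`, then `g₂` satisfies it at `v` iff `g₁` does at `c v`, so the
automorphism `c` maps the level set counted by `ν_n(g₂)` bijectively onto that of `ν_n(g₁)`. -/

namespace Vtx

def subtree {k : ℕ} (v : Vtx A k) : Set (Vtx A k) := {w | Pre v w}

theorem mem_subtree_self {k : ℕ} (v : Vtx A k) : v ∈ subtree v := List.prefix_refl v.1

theorem image_subtree {k : ℕ} {f : Equiv.Perm (Vtx A k)} (hf : f ∈ treeAut A k) (v : Vtx A k) :
    f '' subtree v = subtree (f v) := by
  ext w
  constructor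
  · rintro ⟨u, hu, rfl⟩
    exact (hf.2 v u).2 hu
  · intro hw
    refine ⟨f.symm w, (hf.2 v (f.symm w)).1 ?_, f.apply_symm_apply w⟩
    rwa [Equiv.apply_symm_apply]

end Vtx

theorem Equiv.Perm.exists_eqOn_mul_mul_iff {α : Type*} {H : Subgroup (Equiv.Perm α)}
    {a c : Equiv.Perm α} (ha : a ∈ H) (hc : c ∈ H) (g : Equiv.Perm α) (S : Set α) :
    (∃ h ∈ H, S.EqOn h (a * g * c)) ↔ ∃ h ∈ H, (c '' S).EqOn h g := by
  constructor
  · rintro ⟨h, hh, hS⟩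
    refine ⟨a⁻¹ * h * c⁻¹, H.mul_mem (H.mul_mem (H.inv_mem ha) hh) (H.inv_mem hc), ?_⟩
    rintro _ ⟨x, hx, rfl⟩
    simp [hS hx]
  · rintro ⟨h, hh, hS⟩
    refine ⟨a * h * c, H.mul_mem (H.mul_mem ha hh) hc, fun x hx => ?_⟩
    simp [hS (Set.mem_image_of_mem c hx)]

theorem secPerm_eq_secPerm_iff_eqOn {v : Vtx A 0} {f f' : Equiv.Perm (Vtx A 0)}
    (hf : f ∈ vstab (treeAut A 0) v) (hf' : f' ∈ vstab (treeAut A 0) v) :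
    secPerm v f = secPerm v f' ↔ (Vtx.subtree v).EqOn f f' := by
  rw [Equiv.ext_iff, secPerm_coe hf, secPerm_coe hf']
  constructor
  · intro h w hw
    rw [← Vtx.cat_dropPre hw, ← secFun_key hf, ← secFun_key hf', h]
  · intro h u
    exact congrArg (Vtx.dropPre v.len) (h (Vtx.pre_cat v u))

theorem secPerm_mem_secSub_iff {H : Subgroup (Equiv.Perm (Vtx A 0))} (hH : H ≤ treeAut A 0)
    {v : Vtx A 0} {g : Equiv.Perm (Vtx A 0)} (hg : g ∈ vstab (treeAut A 0) v) :
    secPerm v g ∈ secSub v H ↔ ∃ h ∈ H, (Vtx.subtree v).EqOn h g := by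
  constructor
  · rintro ⟨x, hx, hxg⟩
    exact ⟨x.1, hx.1, (secPerm_eq_secPerm_iff_eqOn x.2 hg).1 hxg⟩
  · rintro ⟨h, hh, hS⟩
    have hv : h v = v := (hS (Vtx.mem_subtree_self v)).trans hg.2
    exact ⟨⟨h, hH hh, hv⟩, ⟨hh, hv⟩, (secPerm_eq_secPerm_iff_eqOn ⟨hH hh, hv⟩ hg).2 hS⟩

theorem setOf_secPerm_mem_secSub_eq {H : Subgroup (Equiv.Perm (Vtx A 0))} (hH : H ≤ treeAut A 0)
    {n : ℕ} {g : Equiv.Perm (Vtx A 0)} (hg : g ∈ levStab (treeAut A 0) n) :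
    {v : Vtx A 0 | v.len = n ∧ secPerm v g ∈ secSub v H} =
      {v : Vtx A 0 | v.len = n ∧ ∃ h ∈ H, (Vtx.subtree v).EqOn h g} := by
  ext v
  exact and_congr_right fun hv => secPerm_mem_secSub_iff hH ⟨hg.1, hg.2 v hv⟩

theorem preimage_setOf_exists_eqOn_subtree {H : Subgroup (Equiv.Perm (Vtx A 0))}
    (hH : H ≤ treeAut A 0) {a c : Equiv.Perm (Vtx A 0)} (ha : a ∈ H) (hc : c ∈ H)
    (g : Equiv.Perm (Vtx A 0)) (n : ℕ) :
    c ⁻¹' {v : Vtx A 0 | v.len = n ∧ ∃ h ∈ H, (Vtx.subtree v).EqOn h g} =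
      {v : Vtx A 0 | v.len = n ∧ ∃ h ∈ H, (Vtx.subtree v).EqOn h (a * g * c)} := by
  ext v
  simp only [Set.mem_preimage, Set.mem_ofPred_eq, (hH hc).1 v, ← Vtx.image_subtree (hH hc),
    Equiv.Perm.exists_eqOn_mul_mul_iff ha hc]

theorem nu_invariant_of_double_coset_general
    (A : ℕ → Type*)
    (G H : Subgroup (Equiv.Perm (Vtx A 0)))
    (hGaut : G ≤ treeAut A 0) (hHG : H ≤ G) (n : ℕ)
    (g₁ g₂ : Equiv.Perm (Vtx A 0)) (hg₁ : g₁ ∈ levStab G n) (hg₂ : g₂ ∈ levStab G n)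
    (hd : (H : Set (Equiv.Perm (Vtx A 0))) * {g₁} * (H : Set (Equiv.Perm (Vtx A 0))) =
        (H : Set (Equiv.Perm (Vtx A 0))) * {g₂} * (H : Set (Equiv.Perm (Vtx A 0)))) :
    {v : Vtx A 0 | v.len = n ∧ secPerm v g₁ ∈ secSub v H}.ncard =
      {v : Vtx A 0 | v.len = n ∧ secPerm v g₂ ∈ secSub v H}.ncard := by
  have hg₂_mem : g₂ ∈ DoubleCoset.doubleCoset g₁ H H := by
    rw [DoubleCoset.doubleCoset, hd]
    exact DoubleCoset.mem_doubleCoset_self H H g₂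
  obtain ⟨a, ha, c, hc, rfl⟩ := DoubleCoset.mem_doubleCoset.1 hg₂_mem
  have hH : H ≤ treeAut A 0 := hHG.trans hGaut
  rw [setOf_secPerm_mem_secSub_eq hH ⟨hGaut hg₁.1, hg₁.2⟩,
    setOf_secPerm_mem_secSub_eq hH ⟨hGaut hg₂.1, hg₂.2⟩,
    ← preimage_setOf_exists_eqOn_subtree hH ha hc,
    Set.ncard_preimage_of_injective_subset_range c.injective (by simp)]

/-- The map `ν_n(g) = |{v ∈ L_n : φ_v(g) ∈ H_v}|` is an invariant of the double
cosets of `H`. -/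
theorem nu_invariant_of_double_coset
    (A : ℕ → Type*) [∀ i, Fintype (A i)] (hA : ∀ i, 2 ≤ Fintype.card (A i))
    (G H : Subgroup (Equiv.Perm (Vtx A 0)))
    (hGaut : G ≤ treeAut A 0) (hHG : H ≤ G) (n : ℕ)
    (g₁ g₂ : Equiv.Perm (Vtx A 0)) (hg₁ : g₁ ∈ levStab G n) (hg₂ : g₂ ∈ levStab G n)
    (hd : (H : Set (Equiv.Perm (Vtx A 0))) * {g₁} * (H : Set (Equiv.Perm (Vtx A 0))) =
        (H : Set (Equiv.Perm (Vtx A 0))) * {g₂} * (H : Set (Equiv.Perm (Vtx A 0)))) :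
    {v : Vtx A 0 | v.len = n ∧ secPerm v g₁ ∈ secSub v H}.ncard =
      {v : Vtx A 0 | v.len = n ∧ secPerm v g₂ ∈ secSub v H}.ncard :=
  nu_invariant_of_double_coset_general A G H hGaut hHG n g₁ g₂ hg₁ hg₂ hd
end
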